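/- arXiv:2104.09931 — 2 statements merged into one kernel-verified Lean document; each statement's English description precedes it below -/
import Mathlib

section
/- Let ν be a finite nonnegative Radon measure on ℝ^d supported in a compact set K, and let r > 0 be arbitrary. For parameters δ > 0 and k ∈ ℕ, define β_{k,δ} := 2^d (2^k+1)^d ν(K) / δ and E_{r,k,δ} := {x ∈ ℝ^d : ν(B(x, 2^k r)) ≥ β_{k,δ} · ν(B(x, r))}. Then ν(E_{r,k,δ}) ≤ δ. -/
/-!
Average over centres. By Fubini, `∫ ν(A ∩ B(x, r/2)) dx = ν(A) |B(0, r/2)|`. A ball `B(x, r/2)`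
meeting the exceptional set `A` at `z` lies in `B(z, r)`, while `B(z, 2^k r) ⊆ B(x, 2^k r + r/2)`,
so `β ν(A ∩ B(x, r/2)) ≤ ν(B(x, 2^k r + r/2))`. Integrating in `x` and comparing the volumes of
the two balls, whose ratio is at most `2^d (2^k + 1)^d`, gives `β ν(A) ≤ 2^d (2^k + 1)^d ν(K)`.
-/

open MeasureTheory Measure Metric

open scoped ENNReal

theorem mul_measure_inter_ball_le {X : Type*} [PseudoMetricSpace X] [MeasurableSpace X]
    (ν : Measure X) {A : Set X} {c : ℝ≥0∞} {r t : ℝ}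
    (hA : ∀ z ∈ A, c * ν (ball z r) ≤ ν (ball z t)) (x : X) {s : ℝ} (hs : s + s ≤ r) :
    c * ν (A ∩ ball x s) ≤ ν (ball x (t + s)) := by
  rcases (A ∩ ball x s).eq_empty_or_nonempty with hempty | ⟨z, hzA, hzx⟩
  · simp [hempty]
  have hsub : A ∩ ball x s ⊆ ball z r := fun w hw ↦
    calc dist w z ≤ dist w x + dist x z := dist_triangle w x z
      _ < s + s := add_lt_add hw.2 (mem_ball'.mp hzx)
      _ ≤ r := hs
  have hsup : ball z t ⊆ ball x (t + s) := ball_subset_ball' (by linarith [mem_ball.mp hzx])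
  calc c * ν (A ∩ ball x s) ≤ c * ν (ball z r) := by gcongr
    _ ≤ ν (ball z t) := hA z hzA
    _ ≤ ν (ball x (t + s)) := measure_mono hsup

section MeasureBall

variable {E : Type*} [NormedAddCommGroup E] [MeasurableSpace E] [BorelSpace E]
  [SecondCountableTopology E]

theorem lintegral_measure_inter_ball (μ ν : Measure E) [μ.IsAddLeftInvariant] [SFinite μ]
    [SFinite ν] (A : Set E) (s : ℝ) :
    ∫⁻ x, ν (A ∩ ball x s) ∂μ = ν A * μ (ball 0 s) := by
  -- intersections with balls do not distinguish `A` from its measurable hull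
  have hM := measurableSet_toMeasurable ν A
  rw [← measure_toMeasurable A]
  simp_rw [← measure_toMeasurable_inter_of_sFinite measurableSet_ball A]
  set M := toMeasurable ν A
  set T : Set (E × E) := {p | p.2 ∈ M ∧ p.1 ∈ ball p.2 s}
  have hT : MeasurableSet T := (measurable_snd hM).inter
    (measurableSet_lt (measurable_fst.dist measurable_snd) measurable_const)
  calc ∫⁻ x, ν (M ∩ ball x s) ∂μ = μ.prod ν T := by
        rw [Measure.prod_apply hT]
        refine lintegral_congr fun x ↦ congrArg ν ?_
        ext y
        simp [T, dist_comm]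
    _ = ∫⁻ y, M.indicator (fun _ ↦ μ (ball 0 s)) y ∂ν := by
        rw [Measure.prod_apply_symm hT]
        refine lintegral_congr fun y ↦ ?_
        by_cases hy : y ∈ M
        · have hball : (fun x ↦ (x, y)) ⁻¹' T = ball y s := by
            ext x
            simp [T, hy]
          rw [Set.indicator_of_mem hy, hball, ← measure_preimage_add μ y, preimage_add_ball,
            sub_self]
        · simp [T, hy]
    _ = ν M * μ (ball 0 s) := by rw [lintegral_indicator_const hM, mul_comm]

theorem mul_measure_mul_measure_ball_le (μ ν : Measure E) [μ.IsAddLeftInvariant] [SFinite μ]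
    [SFinite ν] {A : Set E} {c : ℝ≥0∞} {r t : ℝ}
    (hA : ∀ z ∈ A, c * ν (ball z r) ≤ ν (ball z t)) {s : ℝ} (hs : s + s ≤ r) :
    c * ν A * μ (ball 0 s) ≤ ν Set.univ * μ (ball 0 (t + s)) :=
  calc c * ν A * μ (ball 0 s) = c * ∫⁻ x, ν (A ∩ ball x s) ∂μ := by
        rw [lintegral_measure_inter_ball, mul_assoc]
    _ ≤ ∫⁻ x, c * ν (A ∩ ball x s) ∂μ := lintegral_const_mul_le _ _
    _ ≤ ∫⁻ x, ν (Set.univ ∩ ball x (t + s)) ∂μ := lintegral_mono fun x ↦ by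
        rw [Set.univ_inter]; exact mul_measure_inter_ball_le ν hA x hs
    _ = ν Set.univ * μ (ball 0 (t + s)) := lintegral_measure_inter_ball μ ν Set.univ (t + s)

end MeasureBall

section FiniteDimensional

variable {E : Type*} [NormedAddCommGroup E] [NormedSpace ℝ E] [FiniteDimensional ℝ E]
  [MeasurableSpace E] [BorelSpace E]

theorem mul_measure_le_of_forall_mul_measure_ball_le (ν : Measure E) [SFinite ν] {A : Set E}
    {c : ℝ≥0∞} {r t : ℝ} (hr : 0 < r) (ht : 0 ≤ t)
    (hA : ∀ z ∈ A, c * ν (ball z r) ≤ ν (ball z t)) :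
    c * ν A ≤ ENNReal.ofReal ((2 * t / r + 1) ^ Module.finrank ℝ E) * ν Set.univ := by
  let μ : Measure E := addHaar
  have hs : 0 < r / 2 := half_pos hr
  have hvol : μ (ball 0 (t + r / 2))
      = ENNReal.ofReal ((2 * t / r + 1) ^ Module.finrank ℝ E) * μ (ball 0 (r / 2)) := by
    rw [← addHaar_ball_mul_of_pos μ 0 (by positivity)]
    congr 2
    field_simp
  have key := mul_measure_mul_measure_ball_le μ ν hA (s := r / 2) (by linarith)
  rw [hvol, ← mul_assoc, mul_comm (ν Set.univ)] at key
  exact (ENNReal.mul_le_mul_iff_left (measure_ball_pos μ 0 hs).ne' measure_ball_lt_top.ne).mp key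

theorem mul_measureReal_le_of_forall_mul_measureReal_ball_le (ν : Measure E) [IsFiniteMeasure ν]
    {A : Set E} {β r t : ℝ} (hβ : 0 ≤ β) (hr : 0 < r) (ht : 0 ≤ t)
    (hA : ∀ z ∈ A, β * ν.real (ball z r) ≤ ν.real (ball z t)) :
    β * ν.real A ≤ (2 * t / r + 1) ^ Module.finrank ℝ E * ν.real Set.univ := by
  have hA' : ∀ z ∈ A, ENNReal.ofReal β * ν (ball z r) ≤ ν (ball z t) := fun z hz ↦ by
    rw [← ofReal_measureReal, ← ofReal_measureReal, ← ENNReal.ofReal_mul hβ]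
    exact ENNReal.ofReal_le_ofReal (hA z hz)
  have key := ENNReal.toReal_mono (ENNReal.mul_ne_top ENNReal.ofReal_ne_top (measure_ne_top _ _))
    (mul_measure_le_of_forall_mul_measure_ball_le ν hr ht hA')
  rwa [ENNReal.toReal_mul, ENNReal.toReal_mul, ENNReal.toReal_ofReal hβ,
    ENNReal.toReal_ofReal (by positivity)] at key

end FiniteDimensional

theorem measure_of_doubling_exceptional_set_le_general
    (d : ℕ) (ν : Measure (EuclideanSpace ℝ (Fin d))) [IsFiniteMeasure ν]
    (K : Set (EuclideanSpace ℝ (Fin d))) (hsupp : ν Kᶜ = 0)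
    (r δ : ℝ) (hr : 0 < r) (hδ : 0 < δ) (k : ℕ) :
    ν {x | (2:ℝ) ^ d * ((2:ℝ) ^ k + 1) ^ d * (ν K).toReal / δ * (ν (ball x r)).toReal
        ≤ (ν (ball x ((2:ℝ) ^ k * r))).toReal} ≤ ENNReal.ofReal δ := by
  set M : ℝ := (2:ℝ) ^ d * ((2:ℝ) ^ k + 1) ^ d with hM
  set m : ℝ := (ν K).toReal
  set S := {x | M * m / δ * (ν (ball x r)).toReal ≤ (ν (ball x ((2:ℝ) ^ k * r))).toReal}
  have hνK : ν.real Set.univ = m := by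
    rw [measureReal_def, ← measure_of_measure_compl_eq_zero hsupp]
  have hratio : (2 * (2 ^ k * r) / r + 1) ^ Module.finrank ℝ (EuclideanSpace ℝ (Fin d)) ≤ M := by
    rw [hM, finrank_euclideanSpace_fin, ← mul_pow, mul_div_assoc, mul_div_cancel_right₀ _ hr.ne']
    gcongr
    linarith
  have hbound : M * m / δ * ν.real S ≤ M * m := by
    refine (mul_measureReal_le_of_forall_mul_measureReal_ball_le ν (by positivity) hr
      (by positivity) fun z hz ↦ hz).trans ?_
    rw [hνK]
    gcongr
  have hSm : ν.real S ≤ m := hνK ▸ measureReal_mono (Set.subset_univ S)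
  rw [ENNReal.le_ofReal_iff_toReal_le (measure_ne_top ν S) hδ.le, ← measureReal_def]
  rcases (ENNReal.toReal_nonneg : 0 ≤ m).eq_or_lt with hm | hm
  · linarith
  · rw [div_mul_eq_mul_div, div_le_iff₀ hδ] at hbound
    exact le_of_mul_le_mul_left hbound (by positivity)

/-- The key estimate in the proof of the temperance property of tangent measures (following
Preiss): for a finite measure `ν` supported in a compact `K`, the set of points where
`ν(B(x, 2^k r)) ≥ β_{k,δ} ν(B(x,r))`, with `β_{k,δ} = 2^d (2^k+1)^d ν(K)/δ`, has
`ν`-measure at most `δ`. -/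
theorem measure_of_doubling_exceptional_set_le
    (d : ℕ) (ν : Measure (EuclideanSpace ℝ (Fin d))) [IsFiniteMeasure ν]
    (K : Set (EuclideanSpace ℝ (Fin d))) (hK : IsCompact K) (hsupp : ν Kᶜ = 0)
    (r δ : ℝ) (hr : 0 < r) (hδ : 0 < δ) (k : ℕ) :
    ν {x | (2:ℝ) ^ d * ((2:ℝ) ^ k + 1) ^ d * (ν K).toReal / δ * (ν (ball x r)).toReal
        ≤ (ν (ball x ((2:ℝ) ^ k * r))).toReal} ≤ ENNReal.ofReal δ :=
  measure_of_doubling_exceptional_set_le_general d ν K hsupp r δ hr hδ k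
end

section
/- Let ν be a finite nonnegative Radon measure on ℝ^d with compact support, let (r_j) be a sequence of positive reals tending to 0, and let η > 0. Then for ν-almost every x₀ there exist a subsequence (r_{j_k}) and constants C, c > 0 such that for all k and all R > 1: ν(B(x₀, R r_{j_k})) / ν(B(x₀, r_{j_k})) ≤ C R^{d+η} and ν(B(x₀, R^{-1} r_{j_k})) / ν(B(x₀, r_{j_k})) ≥ c R^{-(d+η)}. -/
/-!
Fix a scale `ρ` and a constant `C`. If the upper bound fails at `x` for some `R ∈ [2^m, 2^(m+1))`,
then `ν(B(x, 2^(m+1) ρ)) > C 2^(m(d+η)) ν(B(x, ρ))`; a failing lower bound gives the same jump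
between the radii `2^-(m+1) ρ` and `ρ`. Cover the points with such a jump by a maximal separated
net at the smaller radius: by a volume count in `ℝ^d` the larger balls around the net points
overlap at most `≈ 2^(md)` times, so these points carry mass `≲ C⁻¹ 2^(-mη) ν(ℝ^d)`. Summing
over `m`, the points that are not tempered at scale `ρ` have mass `O(1/C)` uniformly in `ρ`.
Hence almost every point is tempered, with some constant, at infinitely many of the scales `r j`,
and these scales form the subsequence.
-/

open MeasureTheory Metric Filter Set Module
open scoped NNReal ENNReal Topology

namespace Metric

theorem exists_maximal_isSeparated {X : Type*} [PseudoEMetricSpace X] (ε : ℝ≥0∞) (s : Set X) :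
    ∃ N, Maximal (fun N ↦ N ⊆ s ∧ IsSeparated ε N) N :=
  zorn_subset _ fun c hcs hc ↦ ⟨⋃₀ c, ⟨sUnion_subset fun _ ht ↦ (hcs ht).1,
    hc.pairwise_sUnion.2 fun _ ht ↦ (hcs ht).2⟩, fun _ ↦ subset_sUnion_of_mem⟩

variable {X : Type*} [PseudoMetricSpace X] {δ : ℝ≥0} {s : Set X}

theorem IsSeparated.lt_dist (hs : IsSeparated δ s) {x y : X} (hx : x ∈ s) (hy : y ∈ s)
    (hxy : x ≠ y) : (δ : ℝ) < dist x y := by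
  have : (δ : ℝ≥0∞) < edist x y := hs hx hy hxy
  rw [edist_nndist, ENNReal.coe_lt_coe, ← NNReal.coe_lt_coe, coe_nndist] at this
  exact this

theorem IsSeparated.pairwiseDisjoint_ball (hs : IsSeparated δ s) :
    s.PairwiseDisjoint fun x ↦ ball x (δ / 2) :=
  fun _ hx _ hy hxy ↦ ball_disjoint_ball (by linarith [hs.lt_dist hx hy hxy])

theorem IsSeparated.countable [TopologicalSpace.SeparableSpace X] (hδ : 0 < δ)
    (hs : IsSeparated δ s) : s.Countable :=
  hs.pairwiseDisjoint_ball.countable_of_isOpen (fun _ _ ↦ isOpen_ball)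
    fun _ _ ↦ nonempty_ball.2 (by positivity)

end Metric

section FiniteDimensional

variable {E : Type*} [NormedAddCommGroup E] [NormedSpace ℝ E] [FiniteDimensional ℝ E]
  [MeasurableSpace E] [BorelSpace E]

theorem Metric.IsSeparated.card_le_of_subset_ball {δ : ℝ≥0} (hδ : 0 < δ) {F : Finset E}
    (hF : IsSeparated δ (F : Set E)) {z : E} {ρ : ℝ} (hρ : 0 ≤ ρ) (hFz : ∀ y ∈ F, y ∈ ball z ρ) :
    (F.card : ℝ≥0∞) ≤ ENNReal.ofReal ((2 * ρ / δ + 1) ^ finrank ℝ E) := by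
  set μ : Measure E := Measure.addHaar
  have hr : (0 : ℝ) < δ / 2 := by positivity
  have hV : μ (ball 0 1) ≠ 0 := (measure_ball_pos μ 0 one_pos).ne'
  have hunion : ⋃ y ∈ F, ball y (δ / 2) ⊆ ball z (ρ + δ / 2) :=
    iUnion₂_subset fun y hy ↦ ball_subset_ball' (by linarith [mem_ball.1 (hFz y hy)])
  have hvol : F.card * ENNReal.ofReal ((δ / 2) ^ finrank ℝ E) * μ (ball 0 1)
      ≤ ENNReal.ofReal ((ρ + δ / 2) ^ finrank ℝ E) * μ (ball 0 1) := calc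
    _ = ∑ y ∈ F, μ (ball y (δ / 2)) := by simp [μ.addHaar_ball_of_pos _ hr, mul_assoc]
    _ = μ (⋃ y ∈ F, ball y (δ / 2)) :=
      (measure_biUnion_finset hF.pairwiseDisjoint_ball fun _ _ ↦ measurableSet_ball).symm
    _ ≤ μ (ball z (ρ + δ / 2)) := measure_mono hunion
    _ = _ := μ.addHaar_ball_of_pos z (by positivity)
  rw [ENNReal.mul_le_mul_iff_left hV measure_ball_lt_top.ne,
    ← ENNReal.le_div_iff_mul_le (by simp [hr]) (by simp),
    ← ENNReal.ofReal_div_of_pos (by positivity), ← div_pow] at hvol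
  convert hvol using 3
  field_simp

theorem Metric.IsSeparated.sum_measure_ball_le (ν : Measure E) {δ : ℝ≥0} (hδ : 0 < δ)
    {F : Finset E} (hF : IsSeparated δ (F : Set E)) {b : ℝ} (hb : 0 ≤ b) :
    ∑ y ∈ F, ν (ball y b) ≤ ENNReal.ofReal ((2 * b / δ + 1) ^ finrank ℝ E) * ν univ := by
  have hmult (x : E) : ∑ y ∈ F, (ball y b).indicator 1 x
      ≤ ENNReal.ofReal ((2 * b / δ + 1) ^ finrank ℝ E) := by
    classical
    simp only [indicator_apply, Pi.one_apply, Finset.sum_boole]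
    refine (hF.subset (Finset.coe_subset.2 (Finset.filter_subset _ _))).card_le_of_subset_ball
      hδ (z := x) hb fun y hy ↦ mem_ball_comm.1 (Finset.mem_filter.1 hy).2
  calc ∑ y ∈ F, ν (ball y b)
      = ∫⁻ x, ∑ y ∈ F, (ball y b).indicator 1 x ∂ν := by
        rw [lintegral_finsetSum _ fun y _ ↦ measurable_one.indicator measurableSet_ball]
        simp [lintegral_indicator_one measurableSet_ball]
    _ ≤ ∫⁻ _, ENNReal.ofReal ((2 * b / δ + 1) ^ finrank ℝ E) ∂ν := lintegral_mono hmult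
    _ = _ := lintegral_const _

theorem measure_le_of_forall_measure_closedBall_le (ν : Measure E) {S : Set E} {δ : ℝ≥0}
    (hδ : 0 < δ) {b : ℝ} (hb : 0 ≤ b) {ε : ℝ≥0∞}
    (h : ∀ x ∈ S, ν (closedBall x δ) ≤ ε * ν (ball x b)) :
    ν S ≤ ε * ENNReal.ofReal ((2 * b / δ + 1) ^ finrank ℝ E) * ν univ := by
  obtain ⟨Y, hY⟩ := exists_maximal_isSeparated (δ : ℝ≥0∞) S
  have hsep : IsSeparated δ Y := hY.prop.2
  have hoverlap :
      ∑' y : Y, ν (ball y b) ≤ ENNReal.ofReal ((2 * b / δ + 1) ^ finrank ℝ E) * ν univ := by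
    rw [ENNReal.tsum_eq_iSup_sum]
    refine iSup_le fun F ↦ ?_
    simpa using (hsep.subset (by simp)).sum_measure_ball_le ν hδ hb
      (F := F.map (Function.Embedding.subtype _))
  calc ν S ≤ ν (⋃ y ∈ Y, closedBall y δ) :=
        measure_mono (IsCover.of_maximal_isSeparated hY).subset_iUnion_closedBall
    _ ≤ ∑' y : Y, ν (closedBall y δ) := measure_biUnion_le ν (hsep.countable hδ) _
    _ ≤ ∑' y : Y, ε * ν (ball y b) := ENNReal.tsum_le_tsum fun y ↦ h y (hY.prop.1 y.2)
    _ ≤ _ := by rw [ENNReal.tsum_mul_left, mul_assoc]; gcongr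

theorem measure_setOf_mul_measure_ball_lt_le (ν : Measure E) [IsFiniteMeasure ν] {κ a b : ℝ}
    (hκ : 0 < κ) (ha : 0 < a) (hb : 0 ≤ b) :
    ν {x | κ * (ν (ball x a)).toReal < (ν (ball x b)).toReal}
      ≤ ENNReal.ofReal (κ⁻¹ * (4 * b / a + 1) ^ finrank ℝ E) * ν univ := by
  set δ : ℝ≥0 := ⟨a / 2, by positivity⟩
  have hδ : 0 < δ := NNReal.coe_pos.1 (half_pos ha)
  have hratio : 2 * b / δ + 1 = 4 * b / a + 1 := by
    change 2 * b / (a / 2) + 1 = _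
    field_simp
    ring
  have hjump (x : E) (hx : κ * (ν (ball x a)).toReal < (ν (ball x b)).toReal) :
      ν (closedBall x δ) ≤ ENNReal.ofReal κ⁻¹ * ν (ball x b) := calc
    _ ≤ ν (ball x a) := measure_mono (closedBall_subset_ball (by change a / 2 < a; linarith))
    _ = ENNReal.ofReal (ν (ball x a)).toReal := (ENNReal.ofReal_toReal (measure_ne_top ν _)).symm
    _ ≤ ENNReal.ofReal (κ⁻¹ * (ν (ball x b)).toReal) :=
        ENNReal.ofReal_le_ofReal ((le_inv_mul_iff₀ hκ).2 hx.le)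
    _ = _ := by
      rw [ENNReal.ofReal_mul (inv_nonneg.2 hκ.le), ENNReal.ofReal_toReal (measure_ne_top ν _)]
  calc _ ≤ _ := measure_le_of_forall_measure_closedBall_le ν hδ hb hjump
    _ = _ := by rw [hratio, ENNReal.ofReal_mul (inv_nonneg.2 hκ.le)]

def IsTemperedAt {X : Type*} [PseudoMetricSpace X] [MeasurableSpace X] (ν : Measure X)
    (α C ρ : ℝ) (x : X) : Prop :=
  ∀ R : ℝ, 1 < R →
    (ν (ball x (R * ρ))).toReal ≤ C * R ^ α * (ν (ball x ρ)).toReal ∧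
    C⁻¹ * R ^ (-α) * (ν (ball x ρ)).toReal ≤ (ν (ball x (R⁻¹ * ρ))).toReal

theorem setOf_not_isTemperedAt_subset {X : Type*} [PseudoMetricSpace X] [MeasurableSpace X]
    (ν : Measure X) [IsFiniteMeasure ν] {α C ρ : ℝ} (hα : 0 ≤ α) (hC : 0 < C) (hρ : 0 < ρ) :
    {x | ¬ IsTemperedAt ν α C ρ x} ⊆ ⋃ m : ℕ,
      {x | C * (2 ^ α) ^ m * (ν (ball x ρ)).toReal < (ν (ball x (2 ^ (m + 1) * ρ))).toReal} ∪
      {x | C * (2 ^ α) ^ m * (ν (ball x (ρ / 2 ^ (m + 1)))).toReal < (ν (ball x ρ)).toReal} := by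
  intro x hx
  simp only [mem_ofPred_eq, IsTemperedAt, not_forall, not_and_or, not_le] at hx
  obtain ⟨R, hR, hbad⟩ := hx
  obtain ⟨m, hmR, hRm⟩ := exists_nat_pow_near hR.le one_lt_two
  have hR0 : 0 < R := one_pos.trans hR
  have hκ : C * (2 ^ α) ^ m ≤ C * R ^ α := by
    rw [Real.rpow_pow_comm zero_le_two]
    gcongr
  refine mem_iUnion.2 ⟨m, ?_⟩
  rcases hbad with hupper | hlower
  · left
    calc C * (2 ^ α) ^ m * (ν (ball x ρ)).toReal ≤ C * R ^ α * (ν (ball x ρ)).toReal := by gcongr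
      _ < (ν (ball x (R * ρ))).toReal := hupper
      _ ≤ (ν (ball x (2 ^ (m + 1) * ρ))).toReal := by
        gcongr
        exact measure_ne_top ν _
  · right
    calc C * (2 ^ α) ^ m * (ν (ball x (ρ / 2 ^ (m + 1)))).toReal
        ≤ C * R ^ α * (ν (ball x (R⁻¹ * ρ))).toReal := by
          gcongr
          · exact measure_ne_top ν _
          · rw [inv_mul_eq_div]
            gcongr
      _ < C * R ^ α * (C⁻¹ * R ^ (-α) * (ν (ball x ρ)).toReal) := by gcongr
      _ = (ν (ball x ρ)).toReal := by rw [Real.rpow_neg hR0.le]; field_simp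

theorem inv_mul_two_rpow_pow_mul_le {C : ℝ} (hC : 0 < C) (d m : ℕ) (η : ℝ) :
    (C * (2 ^ ((d : ℝ) + η)) ^ m)⁻¹ * (2 ^ (m + 3) + 1) ^ d ≤ C⁻¹ * 16 ^ d * ((2 ^ η)⁻¹) ^ m := by
  have hsplit : (2 : ℝ) ^ ((d : ℝ) + η) = 2 ^ d * 2 ^ η := by
    rw [Real.rpow_add two_pos, Real.rpow_natCast]
  have hbase : (2 : ℝ) ^ (m + 3) + 1 ≤ 16 * 2 ^ m := by
    have : (1 : ℝ) ≤ 2 ^ m := one_le_pow₀ one_le_two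
    rw [pow_add]
    linarith
  calc (C * (2 ^ ((d : ℝ) + η)) ^ m)⁻¹ * (2 ^ (m + 3) + 1) ^ d
      ≤ (C * (2 ^ d * 2 ^ η) ^ m)⁻¹ * (16 * 2 ^ m) ^ d := by rw [hsplit]; gcongr
    _ = C⁻¹ * 16 ^ d * ((2 ^ η)⁻¹) ^ m := by
      rw [mul_pow, mul_pow, ← pow_mul, ← pow_mul, mul_comm d m, inv_pow]
      field_simp

theorem measure_setOf_not_isTemperedAt_le (ν : Measure E) [IsFiniteMeasure ν] {η C ρ : ℝ}
    (hη : 0 < η) (hC : 0 < C) (hρ : 0 < ρ) :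
    ν {x | ¬ IsTemperedAt ν (finrank ℝ E + η) C ρ x}
      ≤ ENNReal.ofReal (C⁻¹ * (2 * 16 ^ finrank ℝ E / (1 - (2 ^ η)⁻¹))) * ν univ := by
  set d := finrank ℝ E
  set q : ℝ := (2 ^ η)⁻¹
  have hq0 : 0 ≤ q := by positivity
  have hq1 : q < 1 := inv_lt_one_of_one_lt₀ (Real.one_lt_rpow one_lt_two hη)
  have hlevel (m : ℕ) {a b : ℝ} (ha : 0 < a) (hb : 0 ≤ b) (hab : 4 * b / a = 2 ^ (m + 3)) :
      ν {x | C * (2 ^ ((d : ℝ) + η)) ^ m * (ν (ball x a)).toReal < (ν (ball x b)).toReal}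
        ≤ ENNReal.ofReal (C⁻¹ * 16 ^ d * q ^ m) * ν univ := by
    refine (measure_setOf_mul_measure_ball_lt_le ν (by positivity) ha hb).trans ?_
    rw [hab]
    gcongr ENNReal.ofReal ?_ * _
    exact inv_mul_two_rpow_pow_mul_le hC d m η
  calc _ ≤ ν (⋃ m : ℕ, _ ∪ _) :=
        measure_mono (setOf_not_isTemperedAt_subset ν (by positivity) hC hρ)
    _ ≤ ∑' m : ℕ, ENNReal.ofReal (2 * (C⁻¹ * 16 ^ d * q ^ m)) * ν univ := by
      refine (measure_iUnion_le _).trans (ENNReal.tsum_le_tsum fun m ↦ ?_)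
      calc _ ≤ _ := measure_union_le _ _
        _ ≤ ENNReal.ofReal (C⁻¹ * 16 ^ d * q ^ m) * ν univ
            + ENNReal.ofReal (C⁻¹ * 16 ^ d * q ^ m) * ν univ :=
          add_le_add (hlevel m hρ (by positivity) (by field_simp; ring))
            (hlevel m (by positivity) hρ.le (by field_simp; ring))
        _ = _ := by rw [← add_mul, ← ENNReal.ofReal_add (by positivity) (by positivity), two_mul]
    _ = ENNReal.ofReal (∑' m : ℕ, 2 * (C⁻¹ * 16 ^ d * q ^ m)) * ν univ := by
      rw [ENNReal.tsum_mul_right, ENNReal.ofReal_tsum_of_nonneg (fun _ ↦ by positivity)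
        (((summable_geometric_of_lt_one hq0 hq1).mul_left _).mul_left _)]
    _ = _ := by
      rw [tsum_mul_left, tsum_mul_left, tsum_geometric_of_lt_one hq0 hq1]
      ring_nf

end FiniteDimensional

theorem MeasureTheory.ae_exists_frequently_notMem {α : Type*} [MeasurableSpace α]
    {μ : Measure α} {B : ℕ → ℕ → Set α} {ε : ℕ → ℝ≥0∞} (hε : Tendsto ε atTop (𝓝 0))
    (hB : ∀ n j, μ (B n j) ≤ ε n) : ∀ᵐ x ∂μ, ∃ n, ∃ᶠ j in atTop, x ∉ B n j := by
  have heventually (n : ℕ) : μ {x | ∀ᶠ j in atTop, x ∈ B n j} ≤ ε n := by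
    have hmono : Monotone fun N ↦ ⋂ j ≥ N, B n j :=
      fun _ _ hNN' ↦ biInter_mono (fun _ hj ↦ hNN'.trans hj) fun _ _ ↦ subset_rfl
    have hliminf : {x | ∀ᶠ j in atTop, x ∈ B n j} = ⋃ N, ⋂ j ≥ N, B n j := by
      ext x
      simp [eventually_atTop]
    rw [hliminf, hmono.measure_iUnion]
    exact iSup_le fun N ↦ (measure_mono (biInter_subset_of_mem le_rfl)).trans (hB n N)
  simp only [ae_iff, not_exists, not_frequently, not_not]
  refine nonpos_iff_eq_zero.1 <| ge_of_tendsto' hε fun n ↦ (measure_mono ?_).trans (heventually n)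
  exact fun _ hx ↦ hx n

theorem temperance_of_blowups_general
    (d : ℕ) (ν : Measure (EuclideanSpace ℝ (Fin d))) [IsFiniteMeasure ν]
    (r : ℕ → ℝ) (hrpos : ∀ j, 0 < r j)
    (η : ℝ) (hη : 0 < η) :
    ∀ᵐ x₀ ∂ν, ∃ φ : ℕ → ℕ, StrictMono φ ∧ ∃ C > (0:ℝ), ∃ c > (0:ℝ),
      ∀ k : ℕ, ∀ R : ℝ, 1 < R →
        (ν (ball x₀ (R * r (φ k)))).toReal
            ≤ C * R ^ ((d:ℝ) + η) * (ν (ball x₀ (r (φ k)))).toReal ∧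
        c * R ^ (-((d:ℝ) + η)) * (ν (ball x₀ (r (φ k)))).toReal
            ≤ (ν (ball x₀ (R⁻¹ * r (φ k)))).toReal := by
  set K : ℝ := 2 * 16 ^ d / (1 - (2 ^ η)⁻¹)
  have hbad (n j : ℕ) : ν {x | ¬ IsTemperedAt ν (d + η) (n + 1) (r j) x}
      ≤ ENNReal.ofReal ((n + 1 : ℝ)⁻¹ * K) * ν univ := by
    simpa [finrank_euclideanSpace_fin] using
      measure_setOf_not_isTemperedAt_le ν hη (C := n + 1) (by positivity) (hrpos j)
  have hsmall : Tendsto (fun n : ℕ ↦ ENNReal.ofReal ((n + 1 : ℝ)⁻¹ * K) * ν univ) atTop (𝓝 0) := by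
    have := ENNReal.Tendsto.mul_const
      (ENNReal.tendsto_ofReal (tendsto_one_div_add_atTop_nhds_zero_nat.mul_const K))
      (Or.inr (measure_ne_top ν univ))
    simpa using this
  filter_upwards [ae_exists_frequently_notMem hsmall hbad] with x ⟨n, hn⟩
  obtain ⟨φ, hφ, htempered⟩ := extraction_of_frequently_atTop (by simpa using hn)
  exact ⟨φ, hφ, n + 1, by positivity, (n + 1)⁻¹, by positivity, fun k ↦ htempered k⟩

/-- Temperance of blow-ups (Proposition "Preiss" of the paper): for a compactly supported
finite measure `ν`, a sequence `r_j → 0` and `η > 0`, for `ν`-a.e. `x₀` there is a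
subsequence along which the mass ratios `ν(B(x₀, R r))/ν(B(x₀,r))` are bounded above by
`C R^{d+η}` and below by `c R^{-(d+η)}` (for the radius `R⁻¹ r`), uniformly, for all `R > 1`. -/
theorem temperance_of_blowups
    (d : ℕ) (ν : Measure (EuclideanSpace ℝ (Fin d))) [IsFiniteMeasure ν]
    (hsupp : ∃ K : Set (EuclideanSpace ℝ (Fin d)), IsCompact K ∧ ν Kᶜ = 0)
    (r : ℕ → ℝ) (hrpos : ∀ j, 0 < r j) (hrlim : Tendsto r atTop (nhds 0))
    (η : ℝ) (hη : 0 < η) :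
    ∀ᵐ x₀ ∂ν, ∃ φ : ℕ → ℕ, StrictMono φ ∧ ∃ C > (0:ℝ), ∃ c > (0:ℝ),
      ∀ k : ℕ, ∀ R : ℝ, 1 < R →
        (ν (ball x₀ (R * r (φ k)))).toReal
            ≤ C * R ^ ((d:ℝ) + η) * (ν (ball x₀ (r (φ k)))).toReal ∧
        c * R ^ (-((d:ℝ) + η)) * (ν (ball x₀ (r (φ k)))).toReal
            ≤ (ν (ball x₀ (R⁻¹ * r (φ k)))).toReal :=
  temperance_of_blowups_general d ν r hrpos η hη
end
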